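/- There exists a constant C > 0 (depending only on m, the speeds a_1,…,a_m and the vectors l_1,…,l_m) such that for every p ∈ [1,∞] and all t ≥ 1, the L^p norm over (−∞,0] of y ↦ ∂_t ∂_y e(y,t) is at most C t^{−(1/2)(1−1/p) − 1/2}. (Here 1/∞ is interpreted as 0.) -/

import Mathlib

/-!
The `y`-derivative of `e` is a combination of drifting heat kernels
`H_c(y,t) = exp(-ξ²) / √(4πt)` with `ξ = (y + c t) / √(4t)`, and
`∂ₜ H_c = H_c ((ξ² - 1/2)/t - 2cξ/√(4t))`. For `t ≥ 1` this is at most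
`2 (1 + |c|) exp(-ξ²/2) / t`, a Gaussian envelope bounded by `O(1/t)` with integral
`O(t^{-1/2})`. The `Lᵖ` bound for `f = ∂ₜ∂_y e(·,t)` follows by interpolation,
`‖f‖ₚ ≤ ‖f‖_∞^{1-1/p} ‖f‖₁^{1/p}`.
-/

open MeasureTheory Real Set
open scoped ENNReal

/-- errfn(z) := (1/√π) ∫_{−∞}^{z} e^{−u²} du -/
noncomputable def errfn (z : ℝ) : ℝ :=
  (Real.sqrt Real.pi)⁻¹ * ∫ u in Set.Iic z, Real.exp (-u ^ 2)

/-- e(y,t) := Σ_{k} ( errfn((y + a_k t)/√(4t)) − errfn((y − a_k t)/√(4t)) ) l_k -/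
noncomputable def eKer {n m : ℕ} (a : Fin m → ℝ) (l : Fin m → EuclideanSpace ℝ (Fin n))
    (y t : ℝ) : EuclideanSpace ℝ (Fin n) :=
  ∑ k, (errfn ((y + a k * t) / Real.sqrt (4 * t))
      - errfn ((y - a k * t) / Real.sqrt (4 * t))) • l k

/-- At `p = ⊤` we have `p.toReal⁻¹ = 0`, so the bound reads `‖f‖_∞ ≤ A`. -/
theorem eLpNorm_le_of_norm_le_of_lintegral_le {α E : Type*} [MeasurableSpace α]
    [NormedAddCommGroup E] {μ : Measure α} {f : α → E} {p : ℝ≥0∞} {A B : ℝ}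
    (hp : 1 ≤ p) (hA₀ : 0 ≤ A) (hB₀ : 0 ≤ B) (hA : ∀ x, ‖f x‖ ≤ A)
    (hB : ∫⁻ x, ‖f x‖ₑ ∂μ ≤ ENNReal.ofReal B) :
    eLpNorm f p μ ≤ ENNReal.ofReal (A ^ (1 - p.toReal⁻¹) * B ^ p.toReal⁻¹) := by
  rcases eq_or_ne p ⊤ with rfl | hp_top
  · simpa using eLpNormEssSup_le_of_ae_bound (μ := μ) (ae_of_all _ hA)
  set q := p.toReal
  have hq : 1 ≤ q := by simpa using ENNReal.toReal_mono hp_top hp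
  have hA' : ∀ x, ‖f x‖ₑ ≤ ENNReal.ofReal A := fun x => by
    simpa [← ofReal_norm] using ENNReal.ofReal_le_ofReal (hA x)
  have hpow : ∫⁻ x, ‖f x‖ₑ ^ q ∂μ ≤ ENNReal.ofReal (A ^ (q - 1) * B) :=
    calc ∫⁻ x, ‖f x‖ₑ ^ q ∂μ
        ≤ ∫⁻ x, ENNReal.ofReal A ^ (q - 1) * ‖f x‖ₑ ∂μ := by
          refine lintegral_mono fun x => ?_
          calc ‖f x‖ₑ ^ q = ‖f x‖ₑ ^ (q - 1) * ‖f x‖ₑ := by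
                simpa using
                  ENNReal.rpow_add_of_nonneg (x := ‖f x‖ₑ) (q - 1) 1 (by linarith) zero_le_one
            _ ≤ _ := by gcongr; exact hA' x
      _ = ENNReal.ofReal A ^ (q - 1) * ∫⁻ x, ‖f x‖ₑ ∂μ :=
          lintegral_const_mul' _ _
            (ENNReal.rpow_ne_top_of_nonneg (by linarith) ENNReal.ofReal_ne_top)
      _ ≤ ENNReal.ofReal (A ^ (q - 1) * B) := by
          rw [ENNReal.ofReal_mul (by positivity),
            ENNReal.ofReal_rpow_of_nonneg hA₀ (by linarith)]
          gcongr
  rw [eLpNorm_eq_lintegral_rpow_enorm_toReal (by positivity) hp_top, one_div]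
  calc (∫⁻ x, ‖f x‖ₑ ^ q ∂μ) ^ q⁻¹
      ≤ ENNReal.ofReal (A ^ (q - 1) * B) ^ q⁻¹ := by gcongr
    _ = _ := by
        rw [ENNReal.ofReal_rpow_of_nonneg (by positivity) (by positivity),
          mul_rpow (by positivity) hB₀, ← rpow_mul hA₀]
        congr 3
        field_simp

theorem mul_rpow_one_sub_mul_mul_rpow {C t α β θ : ℝ} (hC : 0 < C) (ht : 0 < t) :
    (C * t ^ α) ^ (1 - θ) * (C * t ^ β) ^ θ = C * t ^ ((1 - θ) * α + θ * β) := by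
  rw [mul_rpow hC.le (rpow_nonneg ht.le _), mul_rpow hC.le (rpow_nonneg ht.le _),
    ← rpow_mul ht.le, ← rpow_mul ht.le]
  calc C ^ (1 - θ) * t ^ (α * (1 - θ)) * (C ^ θ * t ^ (β * θ))
      = C ^ (1 - θ + θ) * t ^ (α * (1 - θ) + β * θ) := by rw [rpow_add hC, rpow_add ht]; ring
    _ = C * t ^ ((1 - θ) * α + θ * β) := by rw [sub_add_cancel, rpow_one]; ring_nf

theorem hasDerivAt_errfn (z : ℝ) : HasDerivAt errfn (exp (-z ^ 2) / √π) z := by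
  have hint : Integrable (fun u : ℝ => exp (-u ^ 2)) := by
    simpa using integrable_exp_neg_mul_sq one_pos
  have hsplit : errfn = fun w => (√π)⁻¹ *
      ((∫ u in Iic 0, exp (-u ^ 2)) + ∫ u in (0 : ℝ)..w, exp (-u ^ 2)) := by
    ext w
    rw [errfn, ← intervalIntegral.integral_Iic_sub_Iic hint.integrableOn hint.integrableOn,
      add_sub_cancel]
  have hcont : Continuous fun u : ℝ => exp (-u ^ 2) := by fun_prop
  rw [hsplit, div_eq_inv_mul]
  exact ((intervalIntegral.integral_hasDerivAt_right hint.intervalIntegrable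
    (hcont.stronglyMeasurableAtFilter _ _) hcont.continuousAt).const_add _).const_mul _

noncomputable def frontCoord (c y t : ℝ) : ℝ := (y + c * t) / √(4 * t)

noncomputable def heatFront (c y t : ℝ) : ℝ :=
  exp (-frontCoord c y t ^ 2) / (√π * √(4 * t))

theorem hasDerivAt_errfn_frontCoord (c t y : ℝ) :
    HasDerivAt (fun y => errfn (frontCoord c y t)) (heatFront c y t) y := by
  have h := ((hasDerivAt_id' y).add_const (c * t)).div_const √(4 * t)
  exact ((hasDerivAt_errfn _).comp y h).congr_deriv (by
    rw [heatFront, frontCoord]; field_simp)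

theorem hasDerivAt_sqrt_four_mul {t : ℝ} (ht : 0 < t) :
    HasDerivAt (fun t => √(4 * t)) (2 / √(4 * t)) t :=
  (((hasDerivAt_id' t).const_mul 4).sqrt (by positivity)).congr_deriv (by field_simp; norm_num)

theorem hasDerivAt_frontCoord (c y : ℝ) {t : ℝ} (ht : 0 < t) :
    HasDerivAt (frontCoord c y) (c / √(4 * t) - frontCoord c y t / (2 * t)) t := by
  have hs : √(4 * t) ^ 2 = 4 * t := sq_sqrt (by positivity)
  have hs0 : 0 < √(4 * t) := by positivity
  refine ((((hasDerivAt_id' t).const_mul c).const_add y).div (hasDerivAt_sqrt_four_mul ht)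
    hs0.ne').congr_deriv ?_
  rw [frontCoord]
  field_simp
  rw [hs]
  ring

theorem hasDerivAt_heatFront (c y : ℝ) {t : ℝ} (ht : 0 < t) :
    HasDerivAt (heatFront c y) (heatFront c y t *
      ((frontCoord c y t ^ 2 - 1 / 2) / t - 2 * c * frontCoord c y t / √(4 * t))) t := by
  have hs : √(4 * t) ^ 2 = 4 * t := sq_sqrt (by positivity)
  have hs0 : 0 < √(4 * t) := by positivity
  have hexp := ((hasDerivAt_frontCoord c y ht).pow 2).neg.exp
  have hden := (hasDerivAt_sqrt_four_mul ht).const_mul √π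
  refine (hexp.div hden (by positivity)).congr_deriv ?_
  simp only [heatFront, Pi.neg_apply, Pi.pow_apply]
  field_simp
  linear_combination hs

theorem one_add_mul_exp_neg_le (u : ℝ) : (1 + u) * exp (-u) ≤ 2 * exp (-u / 2) := by
  have h : 1 + u ≤ 2 * exp (u / 2) := by linarith [add_one_le_exp (u / 2)]
  calc (1 + u) * exp (-u) ≤ 2 * exp (u / 2) * exp (-u) := by gcongr
    _ = 2 * exp (-u / 2) := by rw [mul_assoc, ← exp_add]; ring_nf

theorem abs_heatFront_rate_le (c ξ : ℝ) {t s : ℝ} (hs : s ^ 2 = 4 * t) (hs2 : 2 ≤ s) :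
    |(ξ ^ 2 - 1 / 2) / t - 2 * c * ξ / s| ≤ (1 + |c|) * (1 + ξ ^ 2) * s / t := by
  have ht : 0 < t := by nlinarith
  have hξ : |ξ| ≤ 1 + ξ ^ 2 := by nlinarith [sq_abs ξ, abs_nonneg ξ]
  have hdiffusive : |(ξ ^ 2 - 1 / 2) / t| ≤ (1 + ξ ^ 2) * s / t := by
    rw [abs_div, abs_of_pos ht]
    gcongr
    calc |ξ ^ 2 - 1 / 2| ≤ 1 + ξ ^ 2 := abs_le.2 ⟨by nlinarith, by nlinarith⟩
      _ ≤ (1 + ξ ^ 2) * s := le_mul_of_one_le_right (by positivity) (by linarith)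
  have hdrift : |2 * c * ξ / s| ≤ |c| * (1 + ξ ^ 2) * s / t := by
    have h : 2 * c * ξ / s = c * ξ * s / (2 * t) := by
      field_simp
      linear_combination -c * ξ * hs
    rw [h, abs_div, abs_mul, abs_mul, abs_of_pos (by positivity : 0 < s),
      abs_of_pos (by positivity : 0 < 2 * t)]
    gcongr
    linarith
  calc _ ≤ |(ξ ^ 2 - 1 / 2) / t| + |2 * c * ξ / s| := abs_sub _ _
    _ ≤ (1 + ξ ^ 2) * s / t + |c| * (1 + ξ ^ 2) * s / t := add_le_add hdiffusive hdrift
    _ = _ := by ring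

theorem abs_deriv_heatFront_le (c y : ℝ) {t : ℝ} (ht : 1 ≤ t) :
    |deriv (heatFront c y) t| ≤ 2 * (1 + |c|) * exp (-frontCoord c y t ^ 2 / 2) / t := by
  rw [(hasDerivAt_heatFront c y (by linarith)).deriv]
  set ξ := frontCoord c y t
  set s := √(4 * t)
  have hs : s ^ 2 = 4 * t := sq_sqrt (by positivity)
  have hs2 : 2 ≤ s := by nlinarith [sqrt_nonneg (4 * t)]
  have hpi : 1 ≤ √π := one_le_sqrt.2 (by linarith [pi_gt_three])
  have hR := abs_heatFront_rate_le c ξ hs hs2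
  calc |heatFront c y t * ((ξ ^ 2 - 1 / 2) / t - 2 * c * ξ / s)|
      = exp (-ξ ^ 2) * (|(ξ ^ 2 - 1 / 2) / t - 2 * c * ξ / s| / (√π * s)) := by
        rw [abs_mul, heatFront, abs_of_pos (by positivity)]; ring
    _ ≤ exp (-ξ ^ 2) * ((1 + |c|) * (1 + ξ ^ 2) / t) := by
        refine mul_le_mul_of_nonneg_left ?_ (by positivity)
        rw [div_le_iff₀ (by positivity)]
        calc _ ≤ (1 + |c|) * (1 + ξ ^ 2) * s / t := hR
          _ ≤ _ := by rw [mul_div_right_comm]; gcongr; nlinarith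
    _ = (1 + |c|) / t * ((1 + ξ ^ 2) * exp (-ξ ^ 2)) := by ring
    _ ≤ (1 + |c|) / t * (2 * exp (-ξ ^ 2 / 2)) :=
        mul_le_mul_of_nonneg_left (one_add_mul_exp_neg_le _) (by positivity)
    _ = _ := by ring

theorem exp_neg_frontCoord_sq_div_two (c y : ℝ) {t : ℝ} (ht : 0 < t) :
    exp (-frontCoord c y t ^ 2 / 2) = exp (-(8 * t)⁻¹ * (y + c * t) ^ 2) := by
  rw [frontCoord, div_pow, sq_sqrt (by positivity)]
  ring_nf

theorem integrable_exp_neg_frontCoord_sq (c : ℝ) {t : ℝ} (ht : 0 < t) :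
    Integrable fun y => exp (-frontCoord c y t ^ 2 / 2) := by
  simp_rw [exp_neg_frontCoord_sq_div_two c _ ht]
  exact (integrable_exp_neg_mul_sq (by positivity)).comp_add_right (c * t)

theorem integral_exp_neg_frontCoord_sq (c : ℝ) {t : ℝ} (ht : 0 < t) :
    ∫ y, exp (-frontCoord c y t ^ 2 / 2) = √(8 * π) * √t := by
  simp_rw [exp_neg_frontCoord_sq_div_two c _ ht]
  rw [integral_add_right_eq_self (fun y => exp (-(8 * t)⁻¹ * y ^ 2)), integral_gaussian,
    ← sqrt_mul (by positivity)]
  congr 1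
  field_simp

noncomputable def eKerMixedDeriv {n m : ℕ} (a : Fin m → ℝ)
    (l : Fin m → EuclideanSpace ℝ (Fin n)) (y t : ℝ) : EuclideanSpace ℝ (Fin n) :=
  deriv (fun t' => deriv (fun y' => eKer a l y' t') y) t

theorem hasDerivAt_eKer {n m : ℕ} (a : Fin m → ℝ) (l : Fin m → EuclideanSpace ℝ (Fin n))
    (y t : ℝ) :
    HasDerivAt (fun y => eKer a l y t)
      (∑ k, (heatFront (a k) y t - heatFront (-a k) y t) • l k) y := by
  have h : (fun y => eKer a l y t) =
      fun y => ∑ k, (errfn (frontCoord (a k) y t) - errfn (frontCoord (-a k) y t)) • l k := by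
    ext y
    simp only [eKer, frontCoord, neg_mul, ← sub_eq_add_neg]
  rw [h]
  exact HasDerivAt.fun_sum fun k _ =>
    ((hasDerivAt_errfn_frontCoord _ _ _).sub (hasDerivAt_errfn_frontCoord _ _ _)).smul_const _

theorem eKerMixedDeriv_eq {n m : ℕ} (a : Fin m → ℝ) (l : Fin m → EuclideanSpace ℝ (Fin n))
    (y : ℝ) {t : ℝ} (ht : 0 < t) :
    eKerMixedDeriv a l y t =
      ∑ k, (deriv (heatFront (a k) y) t - deriv (heatFront (-a k) y) t) • l k := by
  have h : (fun t => deriv (fun y' => eKer a l y' t) y) =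
      fun t => ∑ k, (heatFront (a k) y t - heatFront (-a k) y t) • l k :=
    funext fun t => (hasDerivAt_eKer a l y t).deriv
  rw [eKerMixedDeriv, h]
  exact (HasDerivAt.fun_sum fun k _ =>
    (((hasDerivAt_heatFront _ y ht).differentiableAt.hasDerivAt).sub
      ((hasDerivAt_heatFront _ y ht).differentiableAt.hasDerivAt)).smul_const (l k)).deriv

theorem norm_eKerMixedDeriv_le {n m : ℕ} (a : Fin m → ℝ)
    (l : Fin m → EuclideanSpace ℝ (Fin n)) (y : ℝ) {t : ℝ} (ht : 1 ≤ t) :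
    ‖eKerMixedDeriv a l y t‖ ≤ 2 / t * ∑ k, (1 + |a k|) * ‖l k‖ *
      (exp (-frontCoord (a k) y t ^ 2 / 2) + exp (-frontCoord (-a k) y t ^ 2 / 2)) := by
  rw [eKerMixedDeriv_eq a l y (by linarith), Finset.mul_sum]
  refine (norm_sum_le _ _).trans (Finset.sum_le_sum fun k _ => ?_)
  rw [norm_smul, Real.norm_eq_abs]
  have h := add_le_add (abs_deriv_heatFront_le (a k) y ht) (abs_deriv_heatFront_le (-a k) y ht)
  rw [abs_neg] at h
  calc |deriv (heatFront (a k) y) t - deriv (heatFront (-a k) y) t| * ‖l k‖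
      ≤ (|deriv (heatFront (a k) y) t| + |deriv (heatFront (-a k) y) t|) * ‖l k‖ := by
        gcongr; exact abs_sub _ _
    _ ≤ _ := by
        grw [h]
        exact (by ring : _ = _).le

theorem norm_eKerMixedDeriv_le_div {n m : ℕ} (a : Fin m → ℝ)
    (l : Fin m → EuclideanSpace ℝ (Fin n)) (y : ℝ) {t : ℝ} (ht : 1 ≤ t) :
    ‖eKerMixedDeriv a l y t‖ ≤ 4 * (∑ k, (1 + |a k|) * ‖l k‖) / t := by
  refine (norm_eKerMixedDeriv_le a l y ht).trans ?_
  rw [Finset.mul_sum, Finset.mul_sum, Finset.sum_div]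
  refine Finset.sum_le_sum fun k _ => ?_
  have h₁ : exp (-frontCoord (a k) y t ^ 2 / 2) ≤ 1 := exp_le_one_iff.2 (by nlinarith)
  have h₂ : exp (-frontCoord (-a k) y t ^ 2 / 2) ≤ 1 := exp_le_one_iff.2 (by nlinarith)
  calc 2 / t * ((1 + |a k|) * ‖l k‖ * (exp (-frontCoord (a k) y t ^ 2 / 2) +
        exp (-frontCoord (-a k) y t ^ 2 / 2)))
      ≤ 2 / t * ((1 + |a k|) * ‖l k‖ * (1 + 1)) := by gcongr
    _ = _ := by ring

theorem lintegral_enorm_eKerMixedDeriv_le {n m : ℕ} (a : Fin m → ℝ)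
    (l : Fin m → EuclideanSpace ℝ (Fin n)) {t : ℝ} (ht : 1 ≤ t) :
    ∫⁻ y, ‖eKerMixedDeriv a l y t‖ₑ ≤
      ENNReal.ofReal (4 * √(8 * π) * (∑ k, (1 + |a k|) * ‖l k‖) / √t) := by
  have ht₀ : 0 < t := by linarith
  set G : ℝ → ℝ := fun y => 2 / t * ∑ k, (1 + |a k|) * ‖l k‖ *
      (exp (-frontCoord (a k) y t ^ 2 / 2) + exp (-frontCoord (-a k) y t ^ 2 / 2))
  have hpair (k : Fin m) : Integrable fun y => (1 + |a k|) * ‖l k‖ *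
      (exp (-frontCoord (a k) y t ^ 2 / 2) + exp (-frontCoord (-a k) y t ^ 2 / 2)) :=
    ((integrable_exp_neg_frontCoord_sq _ ht₀).add
      (integrable_exp_neg_frontCoord_sq _ ht₀)).const_mul _
  have hG : Integrable G := (integrable_finsetSum _ fun k _ => hpair k).const_mul _
  have hG_eq : ∫ y, G y = 4 * √(8 * π) * (∑ k, (1 + |a k|) * ‖l k‖) / √t := by
    rw [integral_const_mul, integral_finsetSum _ fun k _ => hpair k]
    simp_rw [integral_const_mul, integral_add (integrable_exp_neg_frontCoord_sq _ ht₀)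
      (integrable_exp_neg_frontCoord_sq _ ht₀), integral_exp_neg_frontCoord_sq _ ht₀]
    rw [← Finset.sum_mul]
    field_simp
    rw [sq_sqrt ht₀.le]
    ring
  calc ∫⁻ y, ‖eKerMixedDeriv a l y t‖ₑ ≤ ∫⁻ y, ENNReal.ofReal (G y) := by
        refine lintegral_mono fun y => ?_
        rw [← ofReal_norm]
        exact ENNReal.ofReal_le_ofReal (norm_eKerMixedDeriv_le a l y ht)
    _ = ENNReal.ofReal (∫ y, G y) :=
        (ofReal_integral_eq_lintegral_ofReal hG (ae_of_all _ fun y => by positivity)).symm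
    _ = _ := by rw [hG_eq]

theorem stmt1_general {n m : ℕ} (a : Fin m → ℝ)
    (l : Fin m → EuclideanSpace ℝ (Fin n)) :
    ∃ C : ℝ, 0 < C ∧ ∀ p : ℝ≥0∞, 1 ≤ p → ∀ t : ℝ, 1 ≤ t →
      eLpNorm (fun y => deriv (fun t' => deriv (fun y' => eKer a l y' t') y) t) p
          (volume.restrict (Set.Iic (0 : ℝ)))
        ≤ ENNReal.ofReal (C * t ^ (-(1 / 2 : ℝ) * (1 - (p.toReal)⁻¹) - 1 / 2)) := by
  set W := ∑ k, (1 + |a k|) * ‖l k‖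
  set C := 4 * (1 + √(8 * π)) * W + 1
  have hC : 0 < C := by positivity
  refine ⟨C, hC, fun p hp t ht => ?_⟩
  have ht₀ : 0 < t := by linarith
  have hsup (y : ℝ) : ‖eKerMixedDeriv a l y t‖ ≤ C * t ^ (-1 : ℝ) := by
    refine (norm_eKerMixedDeriv_le_div a l y ht).trans ?_
    rw [rpow_neg_one, ← div_eq_mul_inv]
    gcongr
    nlinarith [sqrt_nonneg (8 * π)]
  have hL1 : ∫⁻ y in Iic 0, ‖eKerMixedDeriv a l y t‖ₑ ≤
      ENNReal.ofReal (C * t ^ (-(1 / 2) : ℝ)) := by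
    refine (setLIntegral_le_lintegral _ _).trans
      ((lintegral_enorm_eKerMixedDeriv_le a l ht).trans (ENNReal.ofReal_le_ofReal ?_))
    rw [rpow_neg ht₀.le, ← sqrt_eq_rpow, ← div_eq_mul_inv]
    gcongr
    nlinarith [sqrt_nonneg (8 * π)]
  calc eLpNorm (fun y => eKerMixedDeriv a l y t) p (volume.restrict (Iic 0))
      ≤ ENNReal.ofReal ((C * t ^ (-1 : ℝ)) ^ (1 - p.toReal⁻¹) *
          (C * t ^ (-(1 / 2) : ℝ)) ^ p.toReal⁻¹) :=
        eLpNorm_le_of_norm_le_of_lintegral_le hp (by positivity) (by positivity) hsup hL1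
    _ = _ := by rw [mul_rpow_one_sub_mul_mul_rpow hC ht₀]; ring_nf

theorem stmt1 {n m : ℕ} (hm : 1 ≤ m) (a : Fin m → ℝ) (ha : ∀ k, 0 < a k)
    (l : Fin m → EuclideanSpace ℝ (Fin n)) :
    ∃ C : ℝ, 0 < C ∧ ∀ p : ℝ≥0∞, 1 ≤ p → ∀ t : ℝ, 1 ≤ t →
      eLpNorm (fun y => deriv (fun t' => deriv (fun y' => eKer a l y' t') y) t) p
          (volume.restrict (Set.Iic (0 : ℝ)))
        ≤ ENNReal.ofReal (C * t ^ (-(1 / 2 : ℝ) * (1 - (p.toReal)⁻¹) - 1 / 2)) :=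
  stmt1_general a l
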